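/- Let α ∈ ℝ, let ψ ∈ L^{2,∞}(ℝ₊) satisfy ∫₀^∞ p ψ(p) dp = 0, and let Λ ↦ f_Λ be any real-valued function bounded on some interval [Λ₁, ∞). For Λ > 0 define A_Λ ψ(p) := 1_{(0,Λ]}(p) · [ p² ψ(p) + (α − 1/4) ∫₀^Λ min(p,q) ψ(q) dq + (f_Λ/Λ) · p · ∫₀^Λ q ψ(q) dq ]. Then A_Λ ψ converges in L²((0,∞)) as Λ → ∞ to the function (L̃_D ψ)(p) := p² ψ(p) + (α − 1/4) ∫₀^∞ min(p,q) ψ(q) dq. -/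

import Mathlib

open Filter MeasureTheory

/-- `ψ ∈ L^{2,∞}(ℝ₊)`: measurable with `∫₀^∞ pⁿ |ψ(p)|² dp < ∞` for all `n`. -/
def MemL2Inf (ψ : ℝ → ℂ) : Prop :=
  AEStronglyMeasurable ψ (volume.restrict (Set.Ioi 0)) ∧
  ∀ n : ℕ, IntegrableOn (fun p : ℝ => p ^ n * ‖ψ p‖^2) (Set.Ioi 0)

/-- The cutoff Dirichlet Bessel operator with coupling `α` plus rank-one counterterm,
`A_Λ ψ(p) = 1_{(0,Λ]}(p) [ p²ψ(p) + (α-1/4)∫₀^Λ min(p,q)ψ(q)dq + (f_Λ/Λ) p ∫₀^Λ qψ(q)dq ]`. -/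
noncomputable def cutoffBesselD (α : ℝ) (f : ℝ → ℝ) (ψ : ℝ → ℂ) (Λ : ℝ) : ℝ → ℂ :=
  fun p => Set.indicator (Set.Ioc (0:ℝ) Λ) (fun p =>
    (p : ℂ)^2 * ψ p
      + ((α : ℂ) - 1/4) * (∫ q in Set.Ioc (0:ℝ) Λ, ((min p q : ℝ) : ℂ) * ψ q)
      + ((f Λ / Λ : ℝ) : ℂ) * (p : ℂ) * (∫ q in Set.Ioc (0:ℝ) Λ, (q : ℂ) * ψ q)) p

/-- The momentum-space Dirichlet Bessel operator
`(L̃_D ψ)(p) = p² ψ(p) + (α - 1/4) ∫₀^∞ min(p,q) ψ(q) dq`. -/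
noncomputable def momentumBesselD (α : ℝ) (ψ : ℝ → ℂ) : ℝ → ℂ :=
  fun p => (p : ℂ)^2 * ψ p
    + ((α : ℂ) - 1/4) * ∫ q in Set.Ioi (0:ℝ), ((min p q : ℝ) : ℂ) * ψ q

open Set Topology ENNReal

/-!
For `p ≤ Λ` the vanishing first moment of `ψ` turns `A_Λ ψ(p) - L̃_D ψ(p)` into `-c_Λ p`, where
`c_Λ` is built from the tails `∫_Λ^∞ ψ = O(Λ⁻²)` and `∫_Λ^∞ q ψ = O(Λ⁻¹)`; with `f` eventually
bounded, `‖c_Λ p‖_{L²(0,Λ)} = O(Λ^{-1/2})`. For `p > Λ` the difference is `-L̃_D ψ(p)`, the tail of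
an `L²` function: again by the vanishing moment, `∫ min(p,q) ψ(q) dq = ∫ (min(p,q) - q) ψ(q) dq`
is `O((1 + p²)⁻¹)`.
-/

lemma setIntegral_Ioi_eq_Ioc_add_Ioi {E : Type*} [NormedAddCommGroup E] [NormedSpace ℝ E]
    {f : ℝ → E} {a b : ℝ} (hab : a ≤ b) (hf : IntegrableOn f (Ioi a)) :
    ∫ x in Ioi a, f x = (∫ x in Ioc a b, f x) + ∫ x in Ioi b, f x := by
  rw [← Ioc_union_Ioi_eq_Ioi hab] at hf ⊢
  exact setIntegral_union (Ioc_disjoint_Ioi le_rfl) measurableSet_Ioi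
    (hf.mono_set subset_union_left) (hf.mono_set subset_union_right)

lemma tendsto_eLpNorm_indicator_Ioi {E : Type*} [NormedAddCommGroup E] {μ : Measure ℝ}
    {p : ℝ≥0∞} {g : ℝ → E} (hp : p ≠ ∞) (hg : MemLp g p μ) :
    Tendsto (fun a => eLpNorm ((Ioi a).indicator g) p μ) atTop (𝓝 0) := by
  rcases eq_or_ne p 0 with rfl | hp0
  · simp
  have hr : 0 < p.toReal := toReal_pos hp0 hp
  simp_rw [eLpNorm_eq_lintegral_rpow_enorm_toReal hp0 hp]
  have hlint : Tendsto (fun a => ∫⁻ x, ‖(Ioi a).indicator g x‖ₑ ^ p.toReal ∂μ) atTop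
      (𝓝 (∫⁻ _, 0 ∂μ)) := by
    refine tendsto_lintegral_filter_of_dominated_convergence' (fun x => ‖g x‖ₑ ^ p.toReal)
      (.of_forall fun a => ?_) (.of_forall fun a => .of_forall fun x => ?_)
      (lintegral_rpow_enorm_lt_top_of_eLpNorm_lt_top hp0 hp hg.2).ne (.of_forall fun x => ?_)
    · exact (hg.1.indicator measurableSet_Ioi).enorm.pow_const _
    · by_cases hx : x ∈ Ioi a <;> simp [hx, hr]
    · refine tendsto_const_nhds.congr' ?_
      filter_upwards [eventually_ge_atTop x] with a ha
      simp [show x ∉ Ioi a from not_lt.2 ha, hr]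
  have := ((ENNReal.continuous_rpow_const (y := 1 / p.toReal)).tendsto _).comp hlint
  simpa [Function.comp_def, hr] using this

lemma memLp_inv_one_add_sq : MemLp (fun x : ℝ => (1 + x ^ 2)⁻¹) 2 volume := by
  have hmeas : AEStronglyMeasurable (fun x : ℝ => (1 + x ^ 2)⁻¹) volume := by fun_prop
  refine (memLp_two_iff_integrable_sq_norm hmeas).2 <|
    integrable_inv_one_add_sq.mono' (hmeas.norm.pow 2) (.of_forall fun x => ?_)
  have h : 0 < (1 + x ^ 2)⁻¹ := by positivity
  have h1 : (1 + x ^ 2)⁻¹ ≤ 1 := inv_le_one_of_one_le₀ (by nlinarith)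
  rw [norm_pow, norm_norm, Real.norm_of_nonneg h.le, sq]
  exact mul_le_of_le_one_left h.le h1

lemma one_add_sq_mul_abs_min_sub_le {p q : ℝ} (hp : 0 ≤ p) (hq : 0 ≤ q) :
    (1 + p ^ 2) * |min p q - q| ≤ q + q ^ 3 := by
  rcases le_total q p with hqp | hpq
  · rw [min_eq_right hqp, sub_self, abs_zero, mul_zero]
    positivity
  · rw [min_eq_left hpq, abs_of_nonpos (by linarith)]
    nlinarith [mul_le_mul_of_nonneg_right (pow_le_pow_left₀ hp hpq 2) hq, pow_nonneg hp 3]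

lemma eLpNorm_indicator_Ioc_mul_le (c : ℂ) {Λ : ℝ} (hΛ : 0 ≤ Λ) :
    eLpNorm ((Ioc 0 Λ).indicator fun p : ℝ => c * p) 2 (volume.restrict (Ioi 0)) ≤
      ENNReal.ofReal (‖c‖ * Λ * √Λ) := by
  have hc : 0 ≤ ‖c‖ * Λ := by positivity
  calc eLpNorm ((Ioc 0 Λ).indicator fun p : ℝ => c * p) 2 (volume.restrict (Ioi 0))
      ≤ eLpNorm ((Ioc 0 Λ).indicator fun p : ℝ => c * p) 2 volume := eLpNorm_restrict_le _ _ _ _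
    _ ≤ eLpNorm ((Ioc 0 Λ).indicator fun _ : ℝ => ‖c‖ * Λ) 2 volume := by
        refine eLpNorm_mono fun p => ?_
        by_cases hp : p ∈ Ioc 0 Λ
        · simp only [indicator_of_mem hp, norm_mul, Complex.norm_real, Real.norm_of_nonneg hc,
            Real.norm_of_nonneg hp.1.le]
          gcongr
          exact hp.2
        · simp [indicator_of_notMem hp]
    _ = ENNReal.ofReal (‖c‖ * Λ * √Λ) := by
        rw [eLpNorm_indicator_const measurableSet_Ioc two_ne_zero ofNat_ne_top, Real.volume_Ioc,
          sub_zero, Real.enorm_of_nonneg hc, ENNReal.ofReal_mul hc, Real.sqrt_eq_rpow,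
          ENNReal.ofReal_rpow_of_nonneg hΛ (by norm_num)]
        norm_num

noncomputable def cutoffDefectCoeff (α : ℝ) (f : ℝ → ℝ) (ψ : ℝ → ℂ) (Λ : ℝ) : ℂ :=
  ((α : ℂ) - 1/4) * (∫ q in Ioi Λ, ψ q) + ((f Λ / Λ : ℝ) : ℂ) * ∫ q in Ioi Λ, (q : ℂ) * ψ q

namespace MemL2Inf

variable {ψ : ℝ → ℂ}

lemma memLp_pow_mul (hψ : MemL2Inf ψ) (n : ℕ) :
    MemLp (fun p : ℝ => (p : ℂ) ^ n * ψ p) 2 (volume.restrict (Ioi 0)) := by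
  have hmeas : AEStronglyMeasurable (fun p : ℝ => (p : ℂ) ^ n * ψ p) (volume.restrict (Ioi 0)) :=
    (Complex.continuous_ofReal.pow n).aestronglyMeasurable.mul hψ.1
  refine (memLp_two_iff_integrable_sq_norm hmeas).2 <| (hψ.2 (2 * n)).congr (.of_forall fun p => ?_)
  simp only [norm_mul, norm_pow, Complex.norm_real, Real.norm_eq_abs, mul_pow, ← pow_mul,
    mul_comm n 2]
  rw [pow_mul, pow_mul, sq_abs]

lemma integrableOn_pow_mul (hψ : MemL2Inf ψ) (n : ℕ) :
    IntegrableOn (fun p : ℝ => (p : ℂ) ^ n * ψ p) (Ioi 0) := by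
  have hw : MemLp (fun p : ℝ => (((1 + p ^ 2)⁻¹ : ℝ) : ℂ)) 2 (volume.restrict (Ioi 0)) :=
    (memLp_inv_one_add_sq.restrict _).ofReal
  refine (hw.integrable_mul ((hψ.memLp_pow_mul n).add (hψ.memLp_pow_mul (n + 2)))).congr
    (.of_forall fun p => ?_)
  have : (1 + (p : ℂ) ^ 2) ≠ 0 := by exact_mod_cast (by positivity : (1 + p ^ 2) ≠ 0)
  simp only [Pi.mul_apply, Pi.add_apply]
  push_cast
  field_simp
  ring

lemma integrableOn_pow_mul_norm (hψ : MemL2Inf ψ) (n : ℕ) :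
    IntegrableOn (fun p : ℝ => p ^ n * ‖ψ p‖) (Ioi 0) :=
  IntegrableOn.congr_fun (hψ.integrableOn_pow_mul n).norm (fun p hp => by
    simp [abs_of_pos (mem_Ioi.1 hp)]) measurableSet_Ioi

lemma integrableOn_min_mul (hψ : MemL2Inf ψ) (p : ℝ) :
    IntegrableOn (fun q : ℝ => ((min p q : ℝ) : ℂ) * ψ q) (Ioi 0) := by
  refine Integrable.mono' (g := fun q => |p| * ‖ψ q‖ + q * ‖ψ q‖) ?_ ?_ ?_
  · have h0 := hψ.integrableOn_pow_mul_norm 0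
    have h1 := hψ.integrableOn_pow_mul_norm 1
    simp only [pow_zero, one_mul, pow_one] at h0 h1
    exact (h0.const_mul |p|).add h1
  · exact (Complex.continuous_ofReal.comp (continuous_const.min continuous_id))
      |>.aestronglyMeasurable.mul hψ.1
  · refine (ae_restrict_iff' measurableSet_Ioi).2 (.of_forall fun q hq => ?_)
    have hmin : |min p q| ≤ |p| + q := abs_min_le_max_abs_abs.trans <| by
      rw [abs_of_pos (mem_Ioi.1 hq)]
      exact max_le_add_of_nonneg (abs_nonneg _) (mem_Ioi.1 hq).le
    rw [norm_mul, Complex.norm_real, Real.norm_eq_abs, ← add_mul]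
    gcongr

lemma norm_setIntegral_Ioi_pow_mul_le (hψ : MemL2Inf ψ) {Λ : ℝ} (hΛ : 0 < Λ) (m k : ℕ) :
    ‖∫ q in Ioi Λ, (q : ℂ) ^ m * ψ q‖ ≤ (∫ q in Ioi 0, q ^ (m + k) * ‖ψ q‖) / Λ ^ k := by
  have hint := hψ.integrableOn_pow_mul_norm (m + k)
  calc ‖∫ q in Ioi Λ, (q : ℂ) ^ m * ψ q‖
      ≤ ∫ q in Ioi Λ, q ^ (m + k) * ‖ψ q‖ / Λ ^ k := by
        refine norm_integral_le_of_norm_le ((hint.mono_set (Ioi_subset_Ioi hΛ.le)).div_const _)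
          ((ae_restrict_iff' measurableSet_Ioi).2 (.of_forall fun q hq => ?_))
        have hq : Λ < q := hq
        rw [norm_mul, norm_pow, Complex.norm_real, Real.norm_of_nonneg (hΛ.trans hq).le,
          le_div_iff₀ (by positivity), pow_add, mul_right_comm]
        gcongr
        exact pow_nonneg (hΛ.trans hq).le m
    _ = (∫ q in Ioi Λ, q ^ (m + k) * ‖ψ q‖) / Λ ^ k := integral_div _ _
    _ ≤ (∫ q in Ioi 0, q ^ (m + k) * ‖ψ q‖) / Λ ^ k := by
        gcongr
        exact (ae_restrict_iff' measurableSet_Ioi).2 (.of_forall fun q hq => by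
          have : (0:ℝ) < q := hq
          positivity)

lemma aestronglyMeasurable_integral_min_mul (hψ : MemL2Inf ψ) (μ : Measure ℝ) [SFinite μ] :
    AEStronglyMeasurable (fun p => ∫ q in Ioi 0, ((min p q : ℝ) : ℂ) * ψ q) μ := by
  have h : AEStronglyMeasurable (fun z : ℝ × ℝ => ((min z.1 z.2 : ℝ) : ℂ) * ψ z.2)
      (μ.prod (volume.restrict (Ioi 0))) :=
    (Complex.continuous_ofReal.comp continuous_min).aestronglyMeasurable.mul hψ.1.comp_snd
  exact h.integral_prod_right'

lemma norm_integral_min_mul_le (hψ : MemL2Inf ψ)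
    (hmom : ∫ q in Ioi (0:ℝ), (q : ℂ) * ψ q = 0) {p : ℝ} (hp : 0 ≤ p) :
    ‖∫ q in Ioi 0, ((min p q : ℝ) : ℂ) * ψ q‖ ≤
      (∫ q in Ioi 0, (q + q ^ 3) * ‖ψ q‖) / (1 + p ^ 2) := by
  have hq1 : IntegrableOn (fun q : ℝ => (q : ℂ) * ψ q) (Ioi 0) := by
    simpa using hψ.integrableOn_pow_mul 1
  have hcentred : ∫ q in Ioi 0, ((min p q : ℝ) : ℂ) * ψ q =
      ∫ q in Ioi 0, ((min p q - q : ℝ) : ℂ) * ψ q := by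
    rw [← sub_zero (∫ q in Ioi 0, ((min p q : ℝ) : ℂ) * ψ q), ← hmom,
      ← integral_sub (hψ.integrableOn_min_mul p) hq1]
    push_cast
    simp only [sub_mul]
  have hbound : IntegrableOn (fun q : ℝ => (q + q ^ 3) * ‖ψ q‖) (Ioi 0) := by
    have h := (hψ.integrableOn_pow_mul_norm 1).add (hψ.integrableOn_pow_mul_norm 3)
    simp only [pow_one] at h
    exact h.congr_fun (fun q _ => (add_mul _ _ _).symm) measurableSet_Ioi
  rw [hcentred, ← integral_div]
  refine norm_integral_le_of_norm_le (hbound.div_const _)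
    ((ae_restrict_iff' measurableSet_Ioi).2 (.of_forall fun q hq => ?_))
  rw [norm_mul, Complex.norm_real, Real.norm_eq_abs, mul_div_right_comm]
  gcongr
  rw [le_div_iff₀ (by positivity), mul_comm]
  exact one_add_sq_mul_abs_min_sub_le hp (le_of_lt hq)

lemma memLp_integral_min_mul (hψ : MemL2Inf ψ) (hmom : ∫ q in Ioi (0:ℝ), (q : ℂ) * ψ q = 0) :
    MemLp (fun p => ∫ q in Ioi 0, ((min p q : ℝ) : ℂ) * ψ q) 2 (volume.restrict (Ioi 0)) := by
  set K := ∫ q in Ioi 0, (q + q ^ 3) * ‖ψ q‖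
  refine ((memLp_inv_one_add_sq.const_mul K).restrict _).of_le
    (hψ.aestronglyMeasurable_integral_min_mul _)
    ((ae_restrict_iff' measurableSet_Ioi).2 (.of_forall fun p hp => ?_))
  have hK : 0 ≤ K := setIntegral_nonneg measurableSet_Ioi fun q hq => by
    have : (0:ℝ) < q := hq
    positivity
  rw [norm_mul, Real.norm_of_nonneg hK, Real.norm_of_nonneg (by positivity), ← div_eq_mul_inv]
  exact hψ.norm_integral_min_mul_le hmom (le_of_lt hp)

lemma memLp_momentumBesselD (hψ : MemL2Inf ψ) (α : ℝ)
    (hmom : ∫ q in Ioi (0:ℝ), (q : ℂ) * ψ q = 0) :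
    MemLp (momentumBesselD α ψ) 2 (volume.restrict (Ioi 0)) :=
  (hψ.memLp_pow_mul 2).add ((hψ.memLp_integral_min_mul hmom).const_mul _)

lemma cutoffBesselD_sub_momentumBesselD (hψ : MemL2Inf ψ)
    (hmom : ∫ q in Ioi (0:ℝ), (q : ℂ) * ψ q = 0) (α : ℝ) (f : ℝ → ℝ) {Λ p : ℝ} (hΛ : 0 ≤ Λ)
    (hp : 0 < p) :
    cutoffBesselD α f ψ Λ p - momentumBesselD α ψ p =
      -((Ioc 0 Λ).indicator (fun p : ℝ => cutoffDefectCoeff α f ψ Λ * p) p +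
        (Ioi Λ).indicator (momentumBesselD α ψ) p) := by
  rcases le_or_gt p Λ with hpΛ | hΛp
  · have hmem : p ∈ Ioc 0 Λ := ⟨hp, hpΛ⟩
    have htail : ∫ q in Ioi Λ, ((min p q : ℝ) : ℂ) * ψ q = p * ∫ q in Ioi Λ, ψ q := by
      rw [← integral_const_mul]
      refine setIntegral_congr_fun measurableSet_Ioi fun q hq => ?_
      rw [min_eq_left (hpΛ.trans (le_of_lt hq))]
    have hmin := setIntegral_Ioi_eq_Ioc_add_Ioi hΛ (hψ.integrableOn_min_mul p)
    have hmom' := setIntegral_Ioi_eq_Ioc_add_Ioi hΛ (by simpa using hψ.integrableOn_pow_mul 1)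
    rw [hmom] at hmom'
    rw [indicator_of_notMem (show p ∉ Ioi Λ from not_lt.2 hpΛ)]
    simp only [cutoffBesselD, momentumBesselD, indicator_of_mem hmem, cutoffDefectCoeff, hmin,
      htail]
    linear_combination (-((f Λ / Λ : ℝ) : ℂ) * p) * hmom'
  · have hnot : p ∉ Ioc 0 Λ := fun h => (not_le.2 hΛp) h.2
    simp [cutoffBesselD, indicator_of_notMem hnot, indicator_of_mem (show p ∈ Ioi Λ from hΛp)]

lemma norm_cutoffDefectCoeff_le (hψ : MemL2Inf ψ) (α : ℝ) {f : ℝ → ℝ} {Λ C : ℝ} (hΛ : 0 < Λ)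
    (hf : |f Λ| ≤ C) :
    ‖cutoffDefectCoeff α f ψ Λ‖ ≤
      (‖(α : ℂ) - 1/4‖ + C) * (∫ q in Ioi 0, q ^ 2 * ‖ψ q‖) / Λ ^ 2 := by
  have h0 := hψ.norm_setIntegral_Ioi_pow_mul_le hΛ 0 2
  have h1 := hψ.norm_setIntegral_Ioi_pow_mul_le hΛ 1 1
  simp only [pow_zero, one_mul, zero_add, pow_one, Nat.reduceAdd] at h0 h1
  have hfΛ : ‖((f Λ / Λ : ℝ) : ℂ)‖ ≤ C / Λ := by
    rw [Complex.norm_real, Real.norm_eq_abs, abs_div, abs_of_pos hΛ]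
    gcongr
  calc ‖cutoffDefectCoeff α f ψ Λ‖
      ≤ ‖(α : ℂ) - 1/4‖ * ‖∫ q in Ioi Λ, ψ q‖ +
          ‖((f Λ / Λ : ℝ) : ℂ)‖ * ‖∫ q in Ioi Λ, (q : ℂ) * ψ q‖ :=
        (norm_add_le _ _).trans (by rw [norm_mul, norm_mul])
    _ ≤ ‖(α : ℂ) - 1/4‖ * ((∫ q in Ioi 0, q ^ 2 * ‖ψ q‖) / Λ ^ 2) +
          C / Λ * ((∫ q in Ioi 0, q ^ 2 * ‖ψ q‖) / Λ) := by
        gcongr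
        exact (norm_nonneg _).trans hfΛ
    _ = (‖(α : ℂ) - 1/4‖ + C) * (∫ q in Ioi 0, q ^ 2 * ‖ψ q‖) / Λ ^ 2 := by
        field_simp

lemma tendsto_norm_cutoffDefectCoeff_mul_mul_sqrt (hψ : MemL2Inf ψ) (α : ℝ) {f : ℝ → ℝ}
    (hf : ∃ Λ₁ C : ℝ, ∀ Λ ≥ Λ₁, |f Λ| ≤ C) :
    Tendsto (fun Λ => ‖cutoffDefectCoeff α f ψ Λ‖ * Λ * √Λ) atTop (𝓝 0) := by
  obtain ⟨Λ₁, C, hC⟩ := hf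
  set B := (‖(α : ℂ) - 1/4‖ + C) * ∫ q in Ioi 0, q ^ 2 * ‖ψ q‖
  refine squeeze_zero' ?_ ?_ (tendsto_const_nhds.div_atTop Real.tendsto_sqrt_atTop :
    Tendsto (fun Λ => B / √Λ) atTop (𝓝 0))
  · filter_upwards [eventually_ge_atTop 0] with Λ hΛ
    positivity
  · filter_upwards [eventually_ge_atTop Λ₁, eventually_gt_atTop 0] with Λ hΛ₁ hΛ
    calc ‖cutoffDefectCoeff α f ψ Λ‖ * Λ * √Λ ≤ B / Λ ^ 2 * Λ * √Λ := by
          gcongr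
          exact hψ.norm_cutoffDefectCoeff_le α hΛ (hC Λ hΛ₁)
      _ = B / √Λ := by
          field_simp
          rw [Real.sq_sqrt hΛ.le]

lemma eLpNorm_cutoffBesselD_sub_le (hψ : MemL2Inf ψ)
    (hmom : ∫ q in Ioi (0:ℝ), (q : ℂ) * ψ q = 0) (α : ℝ) (f : ℝ → ℝ) {Λ : ℝ} (hΛ : 0 ≤ Λ) :
    eLpNorm (fun p => cutoffBesselD α f ψ Λ p - momentumBesselD α ψ p) 2
        (volume.restrict (Ioi 0)) ≤
      ENNReal.ofReal (‖cutoffDefectCoeff α f ψ Λ‖ * Λ * √Λ) +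
        eLpNorm ((Ioi Λ).indicator (momentumBesselD α ψ)) 2 (volume.restrict (Ioi 0)) := by
  set F := (Ioc 0 Λ).indicator fun p : ℝ => cutoffDefectCoeff α f ψ Λ * p
  set G := (Ioi Λ).indicator (momentumBesselD α ψ)
  have hdecomp : (fun p => cutoffBesselD α f ψ Λ p - momentumBesselD α ψ p)
      =ᵐ[volume.restrict (Ioi 0)] -(F + G) :=
    (ae_restrict_iff' measurableSet_Ioi).2 (.of_forall fun p hp =>
      hψ.cutoffBesselD_sub_momentumBesselD hmom α f hΛ hp)
  have hF : AEStronglyMeasurable F (volume.restrict (Ioi 0)) :=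
    (by fun_prop : Continuous fun p : ℝ => cutoffDefectCoeff α f ψ Λ * p)
      |>.aestronglyMeasurable.indicator measurableSet_Ioc
  have hG : AEStronglyMeasurable G (volume.restrict (Ioi 0)) :=
    (hψ.memLp_momentumBesselD α hmom).1.indicator measurableSet_Ioi
  rw [eLpNorm_congr_ae hdecomp, eLpNorm_neg]
  exact (eLpNorm_add_le hF hG one_le_two).trans (by gcongr; exact eLpNorm_indicator_Ioc_mul_le _ hΛ)

end MemL2Inf

/-- On minimal-domain vectors, the cutoff Dirichlet Bessel operators with any eventually
bounded running coupling converge in `L²((0,∞))` to the momentum-space Bessel operator. -/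
theorem cutoff_besselD_converges_on_minimal (α : ℝ) (ψ : ℝ → ℂ) (hψ : MemL2Inf ψ)
    (hmom : ∫ p in Set.Ioi (0:ℝ), (p : ℂ) * ψ p = 0)
    (f : ℝ → ℝ) (hf : ∃ Λ₁ C : ℝ, ∀ Λ ≥ Λ₁, |f Λ| ≤ C) :
    Tendsto (fun Λ : ℝ =>
        eLpNorm (fun p => cutoffBesselD α f ψ Λ p - momentumBesselD α ψ p) 2
          (volume.restrict (Set.Ioi 0)))
      atTop (nhds 0) := by
  have hlim := (ENNReal.tendsto_ofReal (hψ.tendsto_norm_cutoffDefectCoeff_mul_mul_sqrt α hf)).add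
    (tendsto_eLpNorm_indicator_Ioi ofNat_ne_top (hψ.memLp_momentumBesselD α hmom))
  rw [ENNReal.ofReal_zero, zero_add] at hlim
  refine tendsto_of_tendsto_of_tendsto_of_le_of_le' tendsto_const_nhds hlim
    (.of_forall fun _ => zero_le) ?_
  filter_upwards [eventually_ge_atTop 0] with Λ hΛ
  exact hψ.eLpNorm_cutoffBesselD_sub_le hmom α f hΛ
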